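/- Let p ≥ 1, n ≥ 2, N ≥ 1, and u ∈ C³(Ω, ℝᴺ). Then on {∇u ≠ 0}: |div(|∇u|^{p−2}∇u)|² ≥ div[|∇u|^{2(p−2)}((Δu)ᵀ∇u − (1/2)∇|∇u|²)] + κ_N(p) |∇u|^{2(p−2)} |∇²u|², where κ_N(p) is as defined: for N ≥ 2, κ_N(p) = 1 − (1/8)(4−p)² on [1,4/3), (p−1)² on [4/3,2), and 1 for p ≥ 2; for N = 1, κ_1(p) = (p−1)² on [1,2) and 1 for p ≥ 2. -/

import Mathlib

/-!
At a point with `∇u ≠ 0` put `a := ½ ∇|∇u|² = Σ_β ∇²u^β ∇u^β`, so that `∇|∇u| = a / |∇u|`.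
Expanding both divergences by the product rule, the third derivatives cancel
(`div((Δu)ᵀ∇u − ½∇|∇u|²) = |Δu|² − |∇²u|²`, a flat Bochner identity), and the right-hand side minus
the left-hand side is `|∇u|^(2p−8)` times
`(1 − κ)|∇u|⁴|∇²u|² + 2(p − 2)|∇u|²|a|² + (p − 2)²|∇u a|²`.
Its nonnegativity is linear algebra on the symmetric Hessians: `|∇u a|² ≤ |∇u|²|a|²`,
Cauchy–Schwarz for the components orthogonal to `a` gives `2|a|⁴ ≤ (|∇u|²|a|² + |∇u a|²)|∇²u|²`,
and for `N = 1` the sharper `2|∇u|²|a|² ≤ |∇u|⁴|∇²u|² + |∇u a|²` holds. Each branch of `κ_N(p)`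
then reduces to an elementary inequality between `|∇u|²|a|²`, `|∇u a|²` and `|∇u|⁴|∇²u|²`.
-/

noncomputable section

/-- Partial derivative of `f` at `x` in the `j`-th coordinate direction. -/
def pd {n : ℕ} (j : Fin n) (f : (Fin n → ℝ) → ℝ) (x : Fin n → ℝ) : ℝ :=
  fderiv ℝ f x (Pi.single j 1)

/-- The sharp constant `κ_N(p)`. -/
def kappa (N : ℕ) (p : ℝ) : ℝ :=
  if 2 ≤ p then 1
  else if N = 1 then (p - 1)^2
  else if p < 4/3 then 1 - (4 - p)^2 / 8
  else (p - 1)^2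

open Filter Topology Matrix Finset

section PartialDerivative

variable {n : ℕ} {x : Fin n → ℝ} {f g : (Fin n → ℝ) → ℝ}

lemma pd_congr_of_eventuallyEq (h : f =ᶠ[𝓝 x] g) (j : Fin n) : pd j f x = pd j g x := by
  rw [pd, pd, h.fderiv_eq]

lemma pd_fun_sum {ι : Type*} (s : Finset ι) {f : ι → (Fin n → ℝ) → ℝ}
    (hf : ∀ i ∈ s, DifferentiableAt ℝ (f i) x) (j : Fin n) :
    pd j (fun y => ∑ i ∈ s, f i y) x = ∑ i ∈ s, pd j (f i) x := by
  simp [pd, fderiv_fun_sum hf]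

lemma pd_fun_mul (hf : DifferentiableAt ℝ f x) (hg : DifferentiableAt ℝ g x) (j : Fin n) :
    pd j (fun y => f y * g y) x = pd j f x * g x + f x * pd j g x := by
  simp [pd, fderiv_fun_mul hf hg]
  ring

lemma pd_fun_sub (hf : DifferentiableAt ℝ f x) (hg : DifferentiableAt ℝ g x) (j : Fin n) :
    pd j (fun y => f y - g y) x = pd j f x - pd j g x := by
  simp [pd, fderiv_fun_sub hf hg]

lemma pd_rpow_const (c : ℝ) (hf : DifferentiableAt ℝ f x) (hfx : f x ≠ 0) (j : Fin n) :
    pd j (fun y => f y ^ c) x = c * f x ^ (c - 1) * pd j f x := by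
  simp [pd, (hf.hasFDerivAt.rpow_const (p := c) (Or.inl hfx)).fderiv]

lemma pd_sqrt (hf : DifferentiableAt ℝ f x) (hfx : f x ≠ 0) (j : Fin n) :
    pd j (fun y => √(f y)) x = pd j f x / (2 * √(f x)) := by
  simp [pd, fderiv_sqrt hf hfx, div_eq_inv_mul]

lemma sum_pd_rpow_mul (hg : DifferentiableAt ℝ g x) (hgx : g x ≠ 0) (c : ℝ)
    {V : Fin n → (Fin n → ℝ) → ℝ} (hV : ∀ j, DifferentiableAt ℝ (V j) x) :
    ∑ j, pd j (fun y => g y ^ c * V j y) x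
      = c * g x ^ c / g x * ∑ j, pd j g x * V j x + g x ^ c * ∑ j, pd j (V j) x := by
  simp only [pd_fun_mul (hg.rpow_const (Or.inl hgx)) (hV _), pd_rpow_const c hg hgx,
    Real.rpow_sub_one hgx, sum_add_distrib, mul_sum]
  congr 1
  exact sum_congr rfl fun j _ => by ring

lemma pd_pd_comm (hf : ContDiffAt ℝ 2 f x) (i j : Fin n) :
    pd i (pd j f) x = pd j (pd i f) x := by
  have hsymm := hf.isSymmSndFDerivAt (by simp [minSmoothness_of_isRCLikeNormedField])
  have hdiff : DifferentiableAt ℝ (fderiv ℝ f) x :=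
    (hf.fderiv_right (m := 1) le_rfl).differentiableAt one_ne_zero
  unfold pd
  rw [fderiv_clm_apply hdiff (differentiableAt_const _),
    fderiv_clm_apply hdiff (differentiableAt_const _)]
  simpa using hsymm (Pi.single i 1) (Pi.single j 1)

variable {Ω : Set (Fin n → ℝ)}

lemma ContDiffOn.pd_of_isOpen {k m : WithTop ℕ∞} (hf : ContDiffOn ℝ m f Ω) (hΩ : IsOpen Ω)
    (hkm : k + 1 ≤ m) (j : Fin n) : ContDiffOn ℝ k (pd j f) Ω :=
  (hf.fderiv_of_isOpen hΩ hkm).clm_apply contDiffOn_const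

lemma ContDiffOn.differentiableAt_pd (hf : ContDiffOn ℝ 2 f Ω) (hΩ : IsOpen Ω) (hx : x ∈ Ω)
    (k : Fin n) : DifferentiableAt ℝ (pd k f) x :=
  ((hf.pd_of_isOpen hΩ (by norm_num) k).contDiffAt (hΩ.mem_nhds hx)).differentiableAt one_ne_zero

lemma ContDiffOn.differentiableAt_pd_pd (hf : ContDiffOn ℝ 3 f Ω) (hΩ : IsOpen Ω) (hx : x ∈ Ω)
    (j k : Fin n) : DifferentiableAt ℝ (pd j (pd k f)) x :=
  ((hf.pd_of_isOpen (k := 2) hΩ (by norm_num) k).differentiableAt_pd hΩ hx j)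

lemma pd_pd_pd_comm (hf : ContDiffOn ℝ 3 f Ω) (hΩ : IsOpen Ω) (hx : x ∈ Ω) (i j k : Fin n) :
    pd i (pd j (pd k f)) x = pd k (pd i (pd j f)) x := by
  have hjk : pd j (pd k f) =ᶠ[𝓝 x] pd k (pd j f) := by
    filter_upwards [hΩ.mem_nhds hx] with y hy
    exact pd_pd_comm ((hf.contDiffAt (hΩ.mem_nhds hy)).of_le (by norm_num)) j k
  rw [pd_congr_of_eventuallyEq hjk]
  exact pd_pd_comm ((hf.pd_of_isOpen hΩ (by norm_num) j).contDiffAt (hΩ.mem_nhds hx)) i k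

end PartialDerivative

section VectorValued

variable {n : ℕ} {Ω : Set (Fin n → ℝ)} {x : Fin n → ℝ} {ι : Type*} [Fintype ι]
  {u : ι → (Fin n → ℝ) → ℝ}

lemma pd_sum_sq_pd (hu : ∀ β k, DifferentiableAt ℝ (pd k (u β)) x) (j : Fin n) :
    pd j (fun z => ∑ β, ∑ k, (pd k (u β) z) ^ 2) x
      = 2 * ∑ β, ∑ k, pd j (pd k (u β)) x * pd k (u β) x := by
  rw [pd_fun_sum (f := fun β z => ∑ k, pd k (u β) z ^ 2) _
    (fun β _ => DifferentiableAt.fun_sum fun k _ => (hu β k).pow 2), mul_sum]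
  refine sum_congr rfl fun β _ => ?_
  rw [pd_fun_sum (f := fun k z => pd k (u β) z ^ 2) _ (fun k _ => (hu β k).pow 2), mul_sum]
  refine sum_congr rfl fun k _ => ?_
  simp only [sq]
  rw [pd_fun_mul (hu β k) (hu β k)]
  ring

lemma differentiableAt_pd_sum_sq_pd (hu : ∀ β, ContDiffOn ℝ 3 (u β) Ω) (hΩ : IsOpen Ω)
    (hx : x ∈ Ω) (j : Fin n) :
    DifferentiableAt ℝ (pd j (fun z => ∑ β, ∑ k, (pd k (u β) z) ^ 2)) x :=
  (ContDiffOn.sum fun β _ => ContDiffOn.sum fun k _ =>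
    ((hu β).pd_of_isOpen hΩ (by norm_num) k).pow 2).differentiableAt_pd hΩ hx j

-- Bochner's formula in flat space: `½ Δ|∇u|² = |∇²u|² + ⟨∇u, ∇Δu⟩`.
lemma sum_pd_half_pd_sum_sq_pd (hu : ∀ β, ContDiffOn ℝ 3 (u β) Ω) (hΩ : IsOpen Ω) (hx : x ∈ Ω) :
    ∑ j, pd j (fun y => 1 / 2 * pd j (fun z => ∑ β, ∑ k, (pd k (u β) z) ^ 2) y) x
      = ∑ β, ∑ i, ∑ j, (pd i (pd j (u β)) x) ^ 2
        + ∑ β, ∑ k, pd k (u β) x * pd k (fun y => ∑ j, pd j (pd j (u β)) y) x := by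
  have hW : ∀ y ∈ Ω, ∀ β k, DifferentiableAt ℝ (pd k (u β)) y := fun y hy β k =>
    ((hu β).of_le (by norm_num)).differentiableAt_pd hΩ hy k
  have hM : ∀ β j k, DifferentiableAt ℝ (pd j (pd k (u β))) x := fun β j k =>
    (hu β).differentiableAt_pd_pd hΩ hx j k
  have hloc : ∀ j, (fun y => 1 / 2 * pd j (fun z => ∑ β, ∑ k, (pd k (u β) z) ^ 2) y)
      =ᶠ[𝓝 x] fun y => ∑ β, ∑ k, pd j (pd k (u β)) y * pd k (u β) y := fun j => by
    filter_upwards [hΩ.mem_nhds hx] with y hy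
    rw [pd_sum_sq_pd (hW y hy)]
    ring
  have hexpand : ∀ j, pd j (fun y => ∑ β, ∑ k, pd j (pd k (u β)) y * pd k (u β) y) x
      = ∑ β, ∑ k, (pd k (pd j (pd j (u β))) x * pd k (u β) x
        + pd j (pd k (u β)) x * pd j (pd k (u β)) x) := fun j => by
    rw [pd_fun_sum (f := fun β y => ∑ k, pd j (pd k (u β)) y * pd k (u β) y) _
      fun β _ => DifferentiableAt.fun_sum fun k _ => (hM β j k).mul (hW x hx β k)]
    refine sum_congr rfl fun β _ => ?_
    rw [pd_fun_sum (f := fun k y => pd j (pd k (u β)) y * pd k (u β) y) _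
      fun k _ => (hM β j k).mul (hW x hx β k)]
    refine sum_congr rfl fun k _ => ?_
    rw [pd_fun_mul (hM β j k) (hW x hx β k), pd_pd_pd_comm (hu β) hΩ hx]
  have hlap : ∀ β k, pd k (fun y => ∑ j, pd j (pd j (u β)) y) x
      = ∑ j, pd k (pd j (pd j (u β))) x := fun β k => pd_fun_sum _ (fun j _ => hM β j j) k
  rw [sum_congr rfl fun j _ => (pd_congr_of_eventuallyEq (hloc j) j).trans (hexpand j)]
  simp only [hlap, sum_add_distrib, sq]
  rw [sum_comm, add_comm]
  congr 1
  · exact sum_comm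
  · refine sum_congr rfl fun β _ => ?_
    rw [sum_comm]
    simp only [mul_sum, mul_comm]

lemma differentiableAt_laplacian_mul_pd_sub_half_pd_sum_sq_pd
    (hu : ∀ β, ContDiffOn ℝ 3 (u β) Ω) (hΩ : IsOpen Ω) (hx : x ∈ Ω) (j : Fin n) :
    DifferentiableAt ℝ (fun y => ∑ β, (∑ k, pd k (pd k (u β)) y) * pd j (u β) y
        - 1 / 2 * pd j (fun z => ∑ β, ∑ k, (pd k (u β) z) ^ 2) y) x :=
  (DifferentiableAt.fun_sum fun β _ =>
    (DifferentiableAt.fun_sum fun k _ => (hu β).differentiableAt_pd_pd hΩ hx k k).mul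
      (((hu β).of_le (by norm_num)).differentiableAt_pd hΩ hx j)).sub
    ((differentiableAt_pd_sum_sq_pd hu hΩ hx j).const_mul _)

lemma sum_pd_laplacian_mul_pd_sub_half_pd_sum_sq_pd (hu : ∀ β, ContDiffOn ℝ 3 (u β) Ω)
    (hΩ : IsOpen Ω) (hx : x ∈ Ω) :
    ∑ j, pd j (fun y => ∑ β, (∑ k, pd k (pd k (u β)) y) * pd j (u β) y
        - 1 / 2 * pd j (fun z => ∑ β, ∑ k, (pd k (u β) z) ^ 2) y) x
      = ∑ β, (∑ k, pd k (pd k (u β)) x) ^ 2 - ∑ β, ∑ i, ∑ j, (pd i (pd j (u β)) x) ^ 2 := by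
  have hW : ∀ β k, DifferentiableAt ℝ (pd k (u β)) x := fun β k =>
    ((hu β).of_le (by norm_num)).differentiableAt_pd hΩ hx k
  have hL : ∀ β, DifferentiableAt ℝ (fun y => ∑ k, pd k (pd k (u β)) y) x := fun β =>
    DifferentiableAt.fun_sum fun k _ => (hu β).differentiableAt_pd_pd hΩ hx k k
  have hfirst : ∀ j, pd j (fun y => ∑ β, (∑ k, pd k (pd k (u β)) y) * pd j (u β) y) x
      = ∑ β, (pd j (fun y => ∑ k, pd k (pd k (u β)) y) x * pd j (u β) x
        + (∑ k, pd k (pd k (u β)) x) * pd j (pd j (u β)) x) := fun j => by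
    rw [pd_fun_sum (f := fun β y => (∑ k, pd k (pd k (u β)) y) * pd j (u β) y) _
      fun β _ => (hL β).mul (hW β j)]
    exact sum_congr rfl fun β _ => pd_fun_mul (hL β) (hW β j) j
  have hcross : ∑ j, ∑ β, pd j (fun y => ∑ k, pd k (pd k (u β)) y) x * pd j (u β) x
      = ∑ β, ∑ k, pd k (u β) x * pd k (fun y => ∑ j, pd j (pd j (u β)) y) x := by
    rw [sum_comm]
    simp only [mul_comm]
  have hsq : ∑ j, ∑ β, (∑ k, pd k (pd k (u β)) x) * pd j (pd j (u β)) x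
      = ∑ β, (∑ k, pd k (pd k (u β)) x) ^ 2 := by
    rw [sum_comm]
    simp only [← mul_sum, sq]
  rw [sum_congr rfl fun j _ => pd_fun_sub
      (f := fun y => ∑ β, (∑ k, pd k (pd k (u β)) y) * pd j (u β) y)
      (g := fun y => 1 / 2 * pd j (fun z => ∑ β, ∑ k, (pd k (u β) z) ^ 2) y)
      (DifferentiableAt.fun_sum fun β _ => (hL β).mul (hW β j))
      ((differentiableAt_pd_sum_sq_pd hu hΩ hx j).const_mul _) j,
    sum_sub_distrib, sum_pd_half_pd_sum_sq_pd hu hΩ hx]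
  simp only [hfirst, sum_add_distrib, hcross, hsq]
  ring

end VectorValued

lemma two_mul_add_sq_le {α β A B C D : ℝ} (hα : α ^ 2 ≤ A * B) (hβ : β ^ 2 ≤ C * D)
    (hA : 0 ≤ A) (hB : 0 ≤ B) (hC : 0 ≤ C) (hD : 0 ≤ D) :
    2 * (α + β) ^ 2 ≤ (2 * A + C) * (B + 2 * D) := by
  have h : (4 * (α * β)) ^ 2 ≤ (4 * A * D + C * B) ^ 2 := by
    nlinarith [mul_le_mul hα hβ (sq_nonneg β) (mul_nonneg hA hB), sq_nonneg (4 * A * D - C * B)]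
  nlinarith [abs_le_of_sq_le_sq' h (by positivity)]

section DotProduct

variable {ι η : Type*} [Fintype ι] [Fintype η]

lemma dotProduct_self_nonneg (v : η → ℝ) : 0 ≤ v ⬝ᵥ v :=
  sum_nonneg fun _ _ => mul_self_nonneg _

lemma sq_dotProduct_le (v w : η → ℝ) : (v ⬝ᵥ w) ^ 2 ≤ (v ⬝ᵥ v) * (w ⬝ᵥ w) := by
  simpa only [dotProduct, sq] using sum_mul_sq_le_sq_mul_sq univ v w

lemma sq_sum_dotProduct_le (x y : ι → η → ℝ) :
    (∑ i, x i ⬝ᵥ y i) ^ 2 ≤ (∑ i, x i ⬝ᵥ x i) * ∑ i, y i ⬝ᵥ y i := by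
  simpa only [dotProduct, Fintype.sum_prod_type, sq] using
    sum_mul_sq_le_sq_mul_sq (univ : Finset (ι × η)) (fun p => x p.1 p.2) (fun p => y p.1 p.2)

lemma sum_sq_dotProduct_le (x : ι → η → ℝ) (a : η → ℝ) :
    ∑ i, (x i ⬝ᵥ a) ^ 2 ≤ (∑ i, x i ⬝ᵥ x i) * (a ⬝ᵥ a) := by
  rw [sum_mul]
  exact sum_le_sum fun i _ => sq_dotProduct_le (x i) a

lemma Matrix.IsSymm.dotProduct_mulVec_comm {M : Matrix η η ℝ} (hM : M.IsSymm) (v w : η → ℝ) :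
    v ⬝ᵥ M *ᵥ w = M *ᵥ v ⬝ᵥ w := by
  rw [dotProduct_mulVec, ← mulVec_transpose, hM.eq]

/-- Cauchy–Schwarz for the semidefinite form `|a|² x ⬝ y - (x ⬝ a)(y ⬝ a)`, which pairs the
components of `x` and `y` orthogonal to `a`. -/
lemma sq_sum_orthogonal_dotProduct_le (x y : ι → η → ℝ) (a : η → ℝ) :
    (a ⬝ᵥ a * ∑ i, x i ⬝ᵥ y i - ∑ i, x i ⬝ᵥ a * y i ⬝ᵥ a) ^ 2
      ≤ (a ⬝ᵥ a * ∑ i, x i ⬝ᵥ x i - ∑ i, (x i ⬝ᵥ a) ^ 2)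
        * (a ⬝ᵥ a * ∑ i, y i ⬝ᵥ y i - ∑ i, (y i ⬝ᵥ a) ^ 2) := by
  rcases (dotProduct_self_nonneg a).eq_or_lt with ha | ha
  · obtain rfl : a = 0 := dotProduct_self_eq_zero.mp ha.symm
    simp
  have hproj : ∀ v w : η → ℝ,
      ((a ⬝ᵥ a) • v - (v ⬝ᵥ a) • a) ⬝ᵥ ((a ⬝ᵥ a) • w - (w ⬝ᵥ a) • a)
        = a ⬝ᵥ a * (a ⬝ᵥ a * v ⬝ᵥ w - v ⬝ᵥ a * w ⬝ᵥ a) := fun v w => by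
    simp only [dotProduct_sub, sub_dotProduct, dotProduct_smul, smul_dotProduct, smul_eq_mul,
      dotProduct_comm a w]
    ring
  have key := sq_sum_dotProduct_le (fun i => (a ⬝ᵥ a) • x i - (x i ⬝ᵥ a) • a)
    (fun i => (a ⬝ᵥ a) • y i - (y i ⬝ᵥ a) • a)
  simp only [hproj, ← mul_sum, sum_sub_distrib] at key
  refine le_of_mul_le_mul_left (a := (a ⬝ᵥ a) ^ 2) ?_ (by positivity)
  simp only [sq] at key ⊢
  linarith

lemma two_mul_dotProduct_mulVec_le {M : Matrix η η ℝ} (hM : M.IsSymm) (a : η → ℝ) :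
    2 * (a ⬝ᵥ a) * (M *ᵥ a ⬝ᵥ M *ᵥ a) ≤ (a ⬝ᵥ a) ^ 2 * ∑ j, M j ⬝ᵥ M j + (a ⬝ᵥ M *ᵥ a) ^ 2 := by
  have key := sq_sum_orthogonal_dotProduct_le M (fun j => a j • M *ᵥ a) a
  have e1 : ∑ j, M j ⬝ᵥ (a j • M *ᵥ a) = M *ᵥ a ⬝ᵥ M *ᵥ a := by
    simp only [dotProduct_smul, smul_eq_mul]
    exact hM.dotProduct_mulVec_comm a (M *ᵥ a)
  have e2 : ∑ j, M j ⬝ᵥ a * ((a j • M *ᵥ a) ⬝ᵥ a) = (a ⬝ᵥ M *ᵥ a) ^ 2 := by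
    simp only [smul_dotProduct, smul_eq_mul, ← mul_assoc, ← sum_mul]
    rw [dotProduct_comm (M *ᵥ a), sq]
    exact congrArg (· * _) (dotProduct_comm _ _)
  have e3 : ∑ j, (M j ⬝ᵥ a) ^ 2 = M *ᵥ a ⬝ᵥ M *ᵥ a := by
    simp only [sq]
    rfl
  have e4 : ∑ j, (a j • M *ᵥ a) ⬝ᵥ (a j • M *ᵥ a) = a ⬝ᵥ a * (M *ᵥ a ⬝ᵥ M *ᵥ a) := by
    simp only [smul_dotProduct, dotProduct_smul, smul_eq_mul, ← mul_assoc, ← sum_mul]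
    rfl
  have e5 : ∑ j, ((a j • M *ᵥ a) ⬝ᵥ a) ^ 2 = a ⬝ᵥ a * (a ⬝ᵥ M *ᵥ a) ^ 2 := by
    simp only [smul_dotProduct, smul_eq_mul, mul_pow, ← sum_mul, dotProduct_comm (M *ᵥ a)]
    simp only [dotProduct, sq]
  have hU := sum_sq_dotProduct_le M a
  simp only [e1, e2, e3, e4, e5] at key hU
  have hE : 0 ≤ a ⬝ᵥ a * (a ⬝ᵥ a * ∑ j, M j ⬝ᵥ M j - M *ᵥ a ⬝ᵥ M *ᵥ a) :=
    mul_nonneg (dotProduct_self_nonneg a) (by linarith)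
  generalize a ⬝ᵥ a = A, M *ᵥ a ⬝ᵥ M *ᵥ a = U, a ⬝ᵥ M *ᵥ a = t, ∑ j, M j ⬝ᵥ M j = H at *
  nlinarith

lemma two_mul_sq_dotProduct_sum_mulVec_le (W : ι → η → ℝ) {M : ι → Matrix η η ℝ}
    (hM : ∀ i, (M i).IsSymm) {a : η → ℝ} (ha : a = ∑ i, M i *ᵥ W i) :
    2 * (a ⬝ᵥ a) ^ 2
      ≤ ((∑ i, W i ⬝ᵥ W i) * (a ⬝ᵥ a) + ∑ i, (W i ⬝ᵥ a) ^ 2) * ∑ i, ∑ j, M i j ⬝ᵥ M i j := by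
  set A := a ⬝ᵥ a
  set g := ∑ i, W i ⬝ᵥ W i
  set S := ∑ i, (W i ⬝ᵥ a) ^ 2
  set H := ∑ i, ∑ j, M i j ⬝ᵥ M i j
  set U := ∑ i, M i *ᵥ a ⬝ᵥ M i *ᵥ a
  set D := ∑ i, (M i *ᵥ a ⬝ᵥ a) ^ 2
  have hA : 0 ≤ A := dotProduct_self_nonneg a
  have hg : 0 ≤ g := sum_nonneg fun _ _ => dotProduct_self_nonneg _
  have hS : 0 ≤ S := sum_nonneg fun _ _ => sq_nonneg _
  have hD : 0 ≤ D := sum_nonneg fun _ _ => sq_nonneg _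
  have hH : 0 ≤ H := sum_nonneg fun _ _ => sum_nonneg fun _ _ => dotProduct_self_nonneg _
  have hUH : 2 * A * U ≤ A ^ 2 * H + D := by
    have := sum_le_sum fun i (_ : i ∈ univ) => two_mul_dotProduct_mulVec_le (hM i) a
    simpa only [sum_add_distrib, ← mul_sum, dotProduct_comm a] using this
  -- A² = Σ (Wᵢ ⬝ a)(Mᵢa ⬝ a) + (pairing of the parts of Wᵢ and Mᵢa orthogonal to a): each term is
  -- bounded by Cauchy–Schwarz, and `two_mul_add_sq_le` combines the two bounds.
  have hWM : ∑ i, W i ⬝ᵥ M i *ᵥ a = A := by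
    simp only [fun i => (hM i).dotProduct_mulVec_comm, ← sum_dotProduct, ← ha, A]
  have horth := sq_sum_orthogonal_dotProduct_le W (fun i => M i *ᵥ a) a
  rw [hWM] at horth
  have hpar := sum_mul_sq_le_sq_mul_sq univ (fun i => W i ⬝ᵥ a) (fun i => M i *ᵥ a ⬝ᵥ a)
  have hSg : S ≤ g * A := sum_sq_dotProduct_le W a
  have hDU : D ≤ U * A := sum_sq_dotProduct_le (fun i => M i *ᵥ a) a
  have h4 : 2 * (A ^ 2) ^ 2 ≤ (g * A + S) * (2 * A * U - D) := by
    have := two_mul_add_sq_le hpar horth hS hD (by linarith) (by linarith)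
    rw [add_sub_cancel] at this
    linarith
  have hgAS : 0 ≤ g * A + S := by positivity
  have h5 : 2 * A ^ 2 * A ^ 2 ≤ (g * A + S) * H * A ^ 2 := by
    nlinarith [mul_le_mul_of_nonneg_left (by linarith : 2 * A * U - D ≤ A ^ 2 * H) hgAS]
  rcases hA.eq_or_lt with h0 | hpos
  · rw [← h0] at hgAS ⊢
    simpa using mul_nonneg hgAS hH
  · exact le_of_mul_le_mul_right h5 (by positivity)

end DotProduct

lemma kappa_le_one (N : ℕ) {p : ℝ} (hp : 1 ≤ p) : kappa N p ≤ 1 := by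
  unfold kappa
  split_ifs <;> nlinarith

lemma mul_add_le_two_mul_one_sub_kappa {N : ℕ} {p X S : ℝ} (hp : 1 ≤ p) (hp2 : p < 2)
    (hN : N ≠ 1) (hS : 0 ≤ S) (hSX : S ≤ X) :
    (2 * (2 - p) * X - (2 - p) ^ 2 * S) * (X + S) ≤ 2 * (1 - kappa N p) * X ^ 2 := by
  unfold kappa
  rw [if_neg (not_le.2 hp2), if_neg hN]
  split_ifs
  · nlinarith [sq_nonneg (p * X - 2 * (2 - p) * S)]
  · nlinarith [mul_nonneg (mul_nonneg (by linarith : (0:ℝ) ≤ 2 - p) (sub_nonneg.2 hSX))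
      (by nlinarith : 0 ≤ 2 * (p - 1) * X - (2 - p) * S)]

lemma one_sub_kappa_mul_add_nonneg {N : ℕ} {p X S Y : ℝ} (hp : 1 ≤ p) (hS : 0 ≤ S)
    (hSX : S ≤ X) (hY : 0 ≤ Y) (hsingle : N = 1 → 2 * X ≤ Y + S)
    (hmulti : 2 * X ^ 2 ≤ (X + S) * Y) :
    0 ≤ (1 - kappa N p) * Y + 2 * (p - 2) * X + (p - 2) ^ 2 * S := by
  have hκ : 0 ≤ 1 - kappa N p := by linarith [kappa_le_one N hp]
  rcases le_or_gt 2 p with hp2 | hp2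
  · nlinarith [mul_nonneg hκ hY]
  rcases eq_or_ne N 1 with rfl | hN
  · rw [show kappa 1 p = (p - 1) ^ 2 by simp [kappa, not_le.2 hp2]]
    nlinarith [mul_le_mul_of_nonneg_left (hsingle rfl) (by nlinarith : (0:ℝ) ≤ (2 - p) * p),
      mul_nonneg (by nlinarith : (0:ℝ) ≤ (2 - p) * (p - 1)) (sub_nonneg.2 hSX)]
  rcases (add_nonneg (hS.trans hSX) hS).eq_or_lt with h0 | hpos
  · nlinarith [mul_nonneg hκ hY]
  refine le_of_mul_le_mul_right (a := X + S) ?_ hpos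
  nlinarith [mul_add_le_two_mul_one_sub_kappa hp hp2 hN hS hSX, mul_le_mul_of_nonneg_left hmulti hκ]

lemma kappa_form_nonneg {N : ℕ} {η : Type*} [Fintype η] {p : ℝ} (hp : 1 ≤ p)
    (W : Fin N → η → ℝ) {M : Fin N → Matrix η η ℝ} (hM : ∀ i, (M i).IsSymm) {a : η → ℝ}
    (ha : a = ∑ i, M i *ᵥ W i) :
    0 ≤ (1 - kappa N p) * ((∑ i, W i ⬝ᵥ W i) ^ 2 * ∑ i, ∑ j, M i j ⬝ᵥ M i j)
      + 2 * (p - 2) * ((∑ i, W i ⬝ᵥ W i) * (a ⬝ᵥ a)) + (p - 2) ^ 2 * ∑ i, (W i ⬝ᵥ a) ^ 2 := by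
  have hH : 0 ≤ ∑ i, ∑ j, M i j ⬝ᵥ M i j :=
    sum_nonneg fun _ _ => sum_nonneg fun _ _ => dotProduct_self_nonneg _
  refine one_sub_kappa_mul_add_nonneg hp (sum_nonneg fun _ _ => sq_nonneg _)
    (sum_sq_dotProduct_le W a) (by positivity) ?_ ?_
  · rintro rfl
    simp only [Fin.sum_univ_one] at ha ⊢
    subst ha
    linarith [two_mul_dotProduct_mulVec_le (hM 0) (W 0)]
  · nlinarith [mul_le_mul_of_nonneg_left (two_mul_sq_dotProduct_sum_mulVec_le W hM ha)
      (sq_nonneg (∑ i, W i ⬝ᵥ W i))]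

-- The theorem at a point after expanding both divergences, with `g = |∇u|`, `W = ∇u`,
-- `a = ½ ∇|∇u|²`, `L = Δu` and `H = |∇²u|²`.
lemma add_mul_le_sum_sq_of_form_nonneg {ι η : Type*} [Fintype ι] [Fintype η] (W : ι → η → ℝ)
    (a : η → ℝ) (L : ι → ℝ) {g H p κ : ℝ} (hg : 0 < g) (hgW : g ^ 2 = ∑ i, W i ⬝ᵥ W i)
    (hform : 0 ≤ (1 - κ) * ((∑ i, W i ⬝ᵥ W i) ^ 2 * H)
      + 2 * (p - 2) * ((∑ i, W i ⬝ᵥ W i) * (a ⬝ᵥ a)) + (p - 2) ^ 2 * ∑ i, (W i ⬝ᵥ a) ^ 2) :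
    2 * (p - 2) * g ^ (2 * (p - 2)) / g * ∑ j, a j / g * (∑ i, L i * W i j - 1 / 2 * (2 * a j))
        + g ^ (2 * (p - 2)) * (∑ i, L i ^ 2 - H) + κ * g ^ (2 * (p - 2)) * H
      ≤ ∑ i, ((p - 2) * g ^ (p - 2) / g * ∑ j, a j / g * W i j + g ^ (p - 2) * L i) ^ 2 := by
  have hlhs : ∑ j, a j / g * (∑ i, L i * W i j - 1 / 2 * (2 * a j))
      = (∑ i, L i * (W i ⬝ᵥ a) - a ⬝ᵥ a) / g := by
    simp only [dotProduct, mul_sub, sum_sub_distrib, mul_sum, sub_div, sum_div]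
    rw [sum_comm]
    congr 1 <;> refine sum_congr rfl fun _ _ => ?_
    · exact sum_congr rfl fun _ _ => by ring
    · ring
  have hrhs : ∀ i, ∑ j, a j / g * W i j = W i ⬝ᵥ a / g := fun i => by
    simp only [dotProduct, sum_div]
    exact sum_congr rfl fun _ _ => by ring
  have hexpand : ∀ i, ((p - 2) * g ^ (p - 2) / g * (W i ⬝ᵥ a / g) + g ^ (p - 2) * L i) ^ 2
      = ((p - 2) * g ^ (p - 2) / g ^ 2) ^ 2 * (W i ⬝ᵥ a) ^ 2
        + 2 * (p - 2) * (g ^ (p - 2)) ^ 2 / g ^ 2 * (L i * W i ⬝ᵥ a)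
        + (g ^ (p - 2)) ^ 2 * L i ^ 2 := fun i => by
    field_simp
    ring
  rw [← hgW] at hform
  have hsq : g ^ (2 * (p - 2)) = (g ^ (p - 2)) ^ 2 := by
    rw [mul_comm, Real.rpow_mul hg.le, Real.rpow_two]
  rw [hlhs, hsq]
  simp only [hrhs, hexpand, sum_add_distrib, ← mul_sum]
  generalize g ^ (p - 2) = P, ∑ i, (W i ⬝ᵥ a) ^ 2 = S, ∑ i, L i * W i ⬝ᵥ a = LW,
    ∑ i, L i ^ 2 = LL at *
  have key : ((p - 2) * P / g ^ 2) ^ 2 * S + 2 * (p - 2) * P ^ 2 / g ^ 2 * LW + P ^ 2 * LL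
      - (2 * (p - 2) * P ^ 2 / g * ((LW - a ⬝ᵥ a) / g) + P ^ 2 * (LL - H) + κ * P ^ 2 * H)
      = (P / g ^ 2) ^ 2 * ((1 - κ) * ((g ^ 2) ^ 2 * H) + 2 * (p - 2) * (g ^ 2 * (a ⬝ᵥ a))
        + (p - 2) ^ 2 * S) := by
    field_simp
    ring
  nlinarith [mul_nonneg (sq_nonneg (P / g ^ 2)) hform]

section PointwiseDerivatives

variable {n : ℕ} {ι : Type*}

def jacobianAt (u : ι → (Fin n → ℝ) → ℝ) (x : Fin n → ℝ) : ι → Fin n → ℝ :=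
  fun β k => pd k (u β) x

def hessianAt (u : ι → (Fin n → ℝ) → ℝ) (x : Fin n → ℝ) : ι → Matrix (Fin n) (Fin n) ℝ :=
  fun β => Matrix.of fun j k => pd j (pd k (u β)) x

variable {u : ι → (Fin n → ℝ) → ℝ} {x : Fin n → ℝ}

lemma hessianAt_isSymm (hu : ∀ β, ContDiffAt ℝ 2 (u β) x) (β : ι) : (hessianAt u x β).IsSymm :=
  Matrix.IsSymm.ext fun j k => pd_pd_comm (hu β) k j

variable [Fintype ι]

lemma pd_sum_sq_pd_eq_two_mul_mulVec (hu : ∀ β k, DifferentiableAt ℝ (pd k (u β)) x)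
    (j : Fin n) :
    pd j (fun z => ∑ β, ∑ k, (pd k (u β) z) ^ 2) x
      = 2 * (∑ β, hessianAt u x β *ᵥ jacobianAt u x β) j := by
  simp [pd_sum_sq_pd hu, hessianAt, jacobianAt, Finset.sum_apply, mulVec, dotProduct]

lemma differentiableAt_sum_sq_pd (hu : ∀ β k, DifferentiableAt ℝ (pd k (u β)) x) :
    DifferentiableAt ℝ (fun y => ∑ β, ∑ k, (pd k (u β) y) ^ 2) x :=
  DifferentiableAt.fun_sum fun β _ => DifferentiableAt.fun_sum fun k _ => (hu β k).pow 2

lemma pd_sqrt_sum_sq_pd (hu : ∀ β k, DifferentiableAt ℝ (pd k (u β)) x)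
    (hpos : 0 < ∑ β, ∑ k, (pd k (u β) x) ^ 2) (j : Fin n) :
    pd j (fun y => √(∑ β, ∑ k, (pd k (u β) y) ^ 2)) x
      = (∑ β, hessianAt u x β *ᵥ jacobianAt u x β) j / √(∑ β, ∑ k, (pd k (u β) x) ^ 2) := by
  rw [pd_sqrt (differentiableAt_sum_sq_pd hu) hpos.ne', pd_sum_sq_pd_eq_two_mul_mulVec hu]
  ring

end PointwiseDerivatives

theorem stmt13_general {n N : ℕ} (p : ℝ) (hp : 1 ≤ p)
    (Ω : Set (Fin n → ℝ)) (hΩ : IsOpen Ω)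
    (u : Fin N → (Fin n → ℝ) → ℝ)
    (hu : ∀ α, ContDiffOn ℝ 3 (u α) Ω)
    (gn : (Fin n → ℝ) → ℝ)
    (hgn : ∀ y, gn y = Real.sqrt (∑ α, ∑ j, (pd j (u α) y) ^ 2)) :
    ∀ x ∈ Ω, gn x ≠ 0 →
      (∑ j, pd j (fun y => gn y ^ (2 * (p - 2)) *
            ((∑ β, (∑ k, pd k (fun z => pd k (u β) z) y) * pd j (u β) y)
              - (1/2) * pd j (fun z => ∑ β, ∑ k, (pd k (u β) z) ^ 2) y)) x)
        + kappa N p * gn x ^ (2 * (p - 2)) *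
            (∑ α, ∑ i, ∑ j, (pd i (fun y => pd j (u α) y) x) ^ 2)
      ≤ ∑ α, (∑ j, pd j (fun y => gn y ^ (p - 2) * pd j (u α) y) x) ^ 2 := by
  intro x hx hgx
  set a := ∑ β, hessianAt u x β *ᵥ jacobianAt u x β with ha
  have hgG : gn = fun y => √(∑ β, ∑ k, (pd k (u β) y) ^ 2) := funext hgn
  have hWx : ∀ β k, DifferentiableAt ℝ (pd k (u β)) x := fun β k =>
    ((hu β).of_le (by norm_num)).differentiableAt_pd hΩ hx k
  have hpos : 0 < ∑ β, ∑ k, (pd k (u β) x) ^ 2 := Real.sqrt_ne_zero'.mp (hgn x ▸ hgx)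
  have hgdiff : DifferentiableAt ℝ gn x := hgG ▸ (differentiableAt_sum_sq_pd hWx).sqrt hpos.ne'
  have hpdg : ∀ j, pd j gn x = a j / gn x := fun j => by
    rw [hgG, pd_sqrt_sum_sq_pd hWx hpos]
  rw [sum_pd_rpow_mul hgdiff hgx _
      (differentiableAt_laplacian_mul_pd_sub_half_pd_sum_sq_pd hu hΩ hx),
    sum_pd_laplacian_mul_pd_sub_half_pd_sum_sq_pd hu hΩ hx]
  simp only [sum_pd_rpow_mul hgdiff hgx _ (fun j => hWx _ j), hpdg,
    pd_sum_sq_pd_eq_two_mul_mulVec hWx]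
  refine add_mul_le_sum_sq_of_form_nonneg (jacobianAt u x) a
    (fun β => ∑ k, pd k (pd k (u β)) x) (hgn x ▸ Real.sqrt_pos.mpr hpos) ?_ ?_
  · rw [hgn x, Real.sq_sqrt hpos.le]
    simp only [jacobianAt, dotProduct, sq]
  · have hsymm := hessianAt_isSymm fun β => ((hu β).contDiffAt (hΩ.mem_nhds hx)).of_le
      (by norm_num)
    simpa only [hessianAt, dotProduct, sq, Matrix.of_apply] using
      kappa_form_nonneg hp (jacobianAt u x) hsymm ha

theorem stmt13 {n N : ℕ} (hn : 2 ≤ n) (hN : 1 ≤ N) (p : ℝ) (hp : 1 ≤ p)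
    (Ω : Set (Fin n → ℝ)) (hΩ : IsOpen Ω)
    (u : Fin N → (Fin n → ℝ) → ℝ)
    (hu : ∀ α, ContDiffOn ℝ 3 (u α) Ω)
    (gn : (Fin n → ℝ) → ℝ)
    (hgn : ∀ y, gn y = Real.sqrt (∑ α, ∑ j, (pd j (u α) y) ^ 2)) :
    ∀ x ∈ Ω, gn x ≠ 0 →
      (∑ j, pd j (fun y => gn y ^ (2 * (p - 2)) *
            ((∑ β, (∑ k, pd k (fun z => pd k (u β) z) y) * pd j (u β) y)
              - (1/2) * pd j (fun z => ∑ β, ∑ k, (pd k (u β) z) ^ 2) y)) x)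
        + kappa N p * gn x ^ (2 * (p - 2)) *
            (∑ α, ∑ i, ∑ j, (pd i (fun y => pd j (u α) y) x) ^ 2)
      ≤ ∑ α, (∑ j, pd j (fun y => gn y ^ (p - 2) * pd j (u α) y) x) ^ 2 :=
  stmt13_general p hp Ω hΩ u hu gn hgn
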